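/- Let X be a uniquely arcwise connected continuum, let φ : [0, ∞) → X be a continuous injection with image R = φ([0, ∞)), and suppose there is an arc [a, b] in X such that φ(0) lies in (a, b) = [a, b] − {a, b}. Then R can be extended to a line in X; that is, there is a continuous injection ψ : (−∞, ∞) → X with ψ(t) = φ(t) for all t ∈ [0, ∞). -/

import Mathlib

/-!
Write `φ 0 = f σ` with `0 < σ < 1` for a parametrisation `f` of the arc `[a, b]`. If both
`f '' (0, σ)` and `f '' (σ, 1)` met the ray, say at `φ t₁` and `φ t₂`, then the sub-arc of
`[a, b]` between these points would pass through `φ 0`, while the sub-arc `φ '' [t₁, t₂]` of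
the ray joins the same points and misses `φ 0`; unique arcwise connectedness forbids this. So
one side of `φ 0` on `[a, b]`, say the one towards the endpoint `f c`, is disjoint from the ray,
and `t ↦ f (c + eᵗ (σ - c))` for `t ≤ 0` extends `φ` to a line.
-/

/-- `A` is an arc in `X` joining `x` and `y`: the image of a continuous injection
from `[0,1]` sending `0` to `x` and `1` to `y`. -/
def IsArcBetween {X : Type*} [TopologicalSpace X] (A : Set X) (x y : X) : Prop :=
  ∃ f : unitInterval → X, Continuous f ∧ Function.Injective f ∧
    f 0 = x ∧ f 1 = y ∧ Set.range f = A

/-- `A` is an arc in `X` (a subspace homeomorphic to `[0,1]`). -/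
def IsArc {X : Type*} [TopologicalSpace X] (A : Set X) : Prop :=
  ∃ x y, IsArcBetween A x y

/-- `X` is uniquely arcwise connected: any two distinct points are joined by a unique arc. -/
def UniquelyArcwiseConnected (X : Type*) [TopologicalSpace X] : Prop :=
  ∀ x y : X, x ≠ y → ∃! A : Set X, IsArcBetween A x y

open Set Real AffineMap

lemma apply_zero_notMem_image_segment {X : Type*} {φ : ℝ → X} (hφi : InjOn φ (Ici 0))
    {t₁ t₂ : ℝ} (h₁ : 0 < t₁) (h₂ : 0 < t₂) : φ 0 ∉ φ '' segment ℝ t₁ t₂ := by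
  rintro ⟨t, ht, he⟩
  have ht₀ : 0 < t := (convex_Ioi 0).segment_subset h₁ h₂ ht
  exact ht₀.ne' (hφi (mem_Ici.2 ht₀.le) (mem_Ici.2 le_rfl) he)

section

variable {X : Type*} [TopologicalSpace X]

lemma IsArcBetween.ne {A : Set X} {x y : X} (h : IsArcBetween A x y) : x ≠ y := by
  obtain ⟨f, -, hfi, rfl, rfl, -⟩ := h
  exact hfi.ne zero_ne_one

lemma UniquelyArcwiseConnected.eq_of_isArcBetween (hX : UniquelyArcwiseConnected X)
    {A B : Set X} {x y : X} (hA : IsArcBetween A x y) (hB : IsArcBetween B x y) : A = B :=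
  (hX x y hA.ne).unique hA hB

lemma isArcBetween_image_segment {F : ℝ → X} {c d : ℝ} (hcd : c ≠ d)
    (hFc : ContinuousOn F (segment ℝ c d)) (hFi : InjOn F (segment ℝ c d)) :
    IsArcBetween (F '' segment ℝ c d) (F c) (F d) := by
  have hmem : ∀ u : unitInterval, lineMap c d (u : ℝ) ∈ segment ℝ c d := fun u => by
    rw [segment_eq_image_lineMap]
    exact mem_image_of_mem _ u.2
  refine ⟨fun u => F (lineMap c d (u : ℝ)), hFc.comp_continuous (by fun_prop) hmem,
    fun u v h => Subtype.ext (lineMap_injective ℝ hcd (hFi (hmem u) (hmem v) h)),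
    by simp, by simp, ?_⟩
  rw [segment_eq_image_lineMap, image_image]
  exact range_comp (fun x => F (lineMap c d x)) Subtype.val |>.trans (by rw [Subtype.range_coe])

variable {φ : ℝ → X}

/-- By uniqueness, such an arc is the sub-arc of the ray between its endpoints. -/
lemma UniquelyArcwiseConnected.apply_zero_notMem_of_isArcBetween
    (hX : UniquelyArcwiseConnected X) (hφc : ContinuousOn φ (Ici 0))
    (hφi : InjOn φ (Ici 0)) {A : Set X} {x y : X} (hA : IsArcBetween A x y)
    (hx : x ∈ φ '' Ioi 0) (hy : y ∈ φ '' Ioi 0) : φ 0 ∉ A := by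
  obtain ⟨t₁, ht₁, rfl⟩ := hx
  obtain ⟨t₂, ht₂, rfl⟩ := hy
  have hsub : segment ℝ t₁ t₂ ⊆ Ici 0 :=
    (convex_Ici 0).segment_subset (mem_Ici.2 ht₁.le) (mem_Ici.2 ht₂.le)
  have hne : t₁ ≠ t₂ := by rintro rfl; exact hA.ne rfl
  rw [hX.eq_of_isArcBetween hA
    (isArcBetween_image_segment hne (hφc.mono hsub) (hφi.mono hsub))]
  exact apply_zero_notMem_image_segment hφi ht₁ ht₂

lemma UniquelyArcwiseConnected.disjoint_or_disjoint_of_apply_zero_mem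
    (hX : UniquelyArcwiseConnected X) (hφc : ContinuousOn φ (Ici 0))
    (hφi : InjOn φ (Ici 0)) {F : ℝ → X} {c d s₀ : ℝ} (hFc : ContinuousOn F (Icc c d))
    (hFi : InjOn F (Icc c d)) (hs₀ : s₀ ∈ Ioo c d) (hF₀ : F s₀ = φ 0) :
    Disjoint (F '' openSegment ℝ c s₀) (φ '' Ici 0) ∨
      Disjoint (F '' openSegment ℝ d s₀) (φ '' Ici 0) := by
  rw [openSegment_eq_Ioo hs₀.1, openSegment_symm, openSegment_eq_Ioo hs₀.2]
  by_contra! h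
  obtain ⟨_, ⟨s₁, hs₁, rfl⟩, hR₁⟩ := not_disjoint_iff.1 h.1
  obtain ⟨_, ⟨s₂, hs₂, rfl⟩, hR₂⟩ := not_disjoint_iff.1 h.2
  have hpos : ∀ s ∈ Icc c d, s ≠ s₀ → F s ∈ φ '' Ici 0 → F s ∈ φ '' Ioi 0 := by
    rintro s hs hne ⟨t, ht, he⟩
    refine ⟨t, mem_Ioi.2 (lt_of_le_of_ne ht ?_), he⟩
    rintro rfl
    exact hne (hFi hs (Ioo_subset_Icc_self hs₀) (he.symm.trans hF₀.symm))
  have hs₁₂ : s₁ < s₂ := hs₁.2.trans hs₂.1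
  have hsub : segment ℝ s₁ s₂ ⊆ Icc c d := by
    rw [segment_eq_Icc hs₁₂.le]
    exact Icc_subset_Icc hs₁.1.le hs₂.2.le
  refine hX.apply_zero_notMem_of_isArcBetween hφc hφi
    (isArcBetween_image_segment hs₁₂.ne (hFc.mono hsub) (hFi.mono hsub))
    (hpos s₁ (hsub (left_mem_segment ℝ s₁ s₂)) hs₁.2.ne hR₁)
    (hpos s₂ (hsub (right_mem_segment ℝ s₁ s₂)) hs₂.1.ne' hR₂) ⟨s₀, ?_, hF₀⟩
  rw [segment_eq_Icc hs₁₂.le]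
  exact ⟨hs₁.2.le, hs₂.1.le⟩

lemma exists_line_of_rays {γ : ℝ → X} (hφc : ContinuousOn φ (Ici 0))
    (hφi : InjOn φ (Ici 0)) (hγc : ContinuousOn γ (Iic 0)) (hγi : InjOn γ (Iic 0))
    (h₀ : γ 0 = φ 0) (hd : Disjoint (γ '' Iio 0) (φ '' Ici 0)) :
    ∃ ψ : ℝ → X, Continuous ψ ∧ Function.Injective ψ ∧ ∀ t : ℝ, 0 ≤ t → ψ t = φ t := by
  refine ⟨fun t => if 0 ≤ t then φ t else γ t, ?_, ?_, fun t ht => if_pos ht⟩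
  · refine continuous_if_le continuous_const continuous_id hφc hγc fun t ht => ?_
    rw [← show (0 : ℝ) = t from ht, h₀]
  · intro u v huv
    rcases le_or_gt 0 u with hu | hu <;> rcases le_or_gt 0 v with hv | hv <;>
      simp only [hu, hv, if_pos, not_le.2] at huv
    · exact hφi hu hv huv
    · exact (hd.ne_of_mem (mem_image_of_mem γ hv) (mem_image_of_mem φ hu) huv.symm).elim
    · exact (hd.ne_of_mem (mem_image_of_mem γ hu) (mem_image_of_mem φ hv) huv).elim
    · exact hγi hu.le hv.le huv

lemma exists_line_of_disjoint_openSegment (hφc : ContinuousOn φ (Ici 0))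
    (hφi : InjOn φ (Ici 0)) {F : ℝ → X} {e s : ℝ} (hes : e ≠ s)
    (hFc : ContinuousOn F (segment ℝ e s)) (hFi : InjOn F (segment ℝ e s)) (hF : F s = φ 0)
    (hd : Disjoint (F '' openSegment ℝ e s) (φ '' Ici 0)) :
    ∃ ψ : ℝ → X, Continuous ψ ∧ Function.Injective ψ ∧ ∀ t : ℝ, 0 ≤ t → ψ t = φ t := by
  have hmem : ∀ t ∈ Iic (0 : ℝ), lineMap e s (exp t) ∈ segment ℝ e s := fun t ht => by
    rw [segment_eq_image_lineMap]
    exact mem_image_of_mem _ ⟨(exp_pos t).le, exp_le_one_iff.2 ht⟩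
  refine exists_line_of_rays (γ := fun t => F (lineMap e s (exp t))) hφc hφi
    (hFc.comp (by fun_prop : Continuous fun t => lineMap e s (exp t)).continuousOn hmem)
    (fun u hu v hv h => exp_injective (lineMap_injective ℝ hes (hFi (hmem u hu) (hmem v hv) h)))
    (by simp [hF]) (hd.mono_left ?_)
  rintro _ ⟨t, ht, rfl⟩
  rw [openSegment_eq_image_lineMap]
  exact mem_image_of_mem F (mem_image_of_mem _ ⟨exp_pos t, exp_lt_one_iff.2 ht⟩)

end

theorem ray_extends_to_line
    {X : Type*} [MetricSpace X]
    (hX : UniquelyArcwiseConnected X)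
    (φ : ℝ → X) (hφc : ContinuousOn φ (Set.Ici 0)) (hφi : Set.InjOn φ (Set.Ici 0))
    (a b : X) (A : Set X) (hA : IsArcBetween A a b)
    (h0 : φ 0 ∈ A \ {a, b}) :
    ∃ ψ : ℝ → X, Continuous ψ ∧ Function.Injective ψ ∧
      ∀ t : ℝ, 0 ≤ t → ψ t = φ t := by
  obtain ⟨f, hfc, hfi, rfl, rfl, rfl⟩ := hA
  obtain ⟨⟨σ, hσ⟩, hσ_ne⟩ := h0
  set F : ℝ → X := IccExtend zero_le_one f
  have hFc : ContinuousOn F (Icc 0 1) := (hfc.Icc_extend' (h := zero_le_one)).continuousOn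
  have hFi : InjOn F (Icc 0 1) := fun x hx y hy h => by
    simp only [F, IccExtend_of_mem _ _ hx, IccExtend_of_mem _ _ hy] at h
    exact congrArg Subtype.val (hfi h)
  have hσ_mem : (σ : ℝ) ∈ Ioo 0 1 :=
    ⟨unitInterval.pos_iff_ne_zero.2 fun h => hσ_ne (by simp [← hσ, h]),
      unitInterval.lt_one_iff_ne_one.2 fun h => hσ_ne (by simp [← hσ, h])⟩
  have hFσ : F σ = φ 0 := by simp only [F, IccExtend_val, hσ]
  have hseg : ∀ e ∈ Icc (0 : ℝ) 1, segment ℝ e σ ⊆ Icc 0 1 := fun e he =>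
    (convex_Icc 0 1).segment_subset he (Ioo_subset_Icc_self hσ_mem)
  rcases hX.disjoint_or_disjoint_of_apply_zero_mem hφc hφi hFc hFi hσ_mem hFσ with h | h
  · exact exists_line_of_disjoint_openSegment hφc hφi hσ_mem.1.ne
      (hFc.mono (hseg 0 (left_mem_Icc.2 zero_le_one)))
      (hFi.mono (hseg 0 (left_mem_Icc.2 zero_le_one))) hFσ h
  · exact exists_line_of_disjoint_openSegment hφc hφi hσ_mem.2.ne'
      (hFc.mono (hseg 1 (right_mem_Icc.2 zero_le_one)))
      (hFi.mono (hseg 1 (right_mem_Icc.2 zero_le_one))) hFσ h
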